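/- Let n be a positive integer divisible by 4 and set q = n/4. Consider the three invariant lines L₁ = ℂ·f_0, L₂ = ℂ·(f_q + f_{−q}), L₃ = ℂ·(f_q − f_{−q}) in the regular representation of R_n. Then these three lines are pairwise inequivalent: for distinct i, j ∈ {1,2,3} there is no nonzero ℂ-linear map φ : L_i → L_j with φ(λ_t u) = λ_t(φ(u)) for all t ∈ ZMod n and u ∈ L_i. (They realize the three distinct one-dimensional representations ℂ(1,1), ℂ(−1,1), ℂ(1,−1).) -/
import Mathlib


/-- The regular representation of the dihedral quandle `R_n = Quandle.dihedral n`
(`ZMod n` with `x ◃ y = 2y - x`) on functions `ZMod n → ℂ`: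
`(λ_t f)(x) = f (2t - x)`. -/
def lam (n : ℕ) (t : ZMod n) (f : ZMod n → ℂ) : ZMod n → ℂ :=
  fun x => f (2 * t - x)

/-- `ω = exp(2πi/n)`. -/
noncomputable def dihedralOmega (n : ℕ) : ℂ :=
  Complex.exp (2 * Real.pi * Complex.I / n)

/-- The character `f_s : ZMod n → ℂ`, `f_s(x) = ω^{s·x.val}`. -/
noncomputable def chi (n : ℕ) (s : ℤ) : ZMod n → ℂ :=
  fun x => dihedralOmega n ^ (s * (x.val : ℤ))

/-- `V_s`: the `ℂ`-linear span of `{f_s, f_{-s}}` in `ZMod n → ℂ`. -/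
noncomputable def Vsub (n : ℕ) (s : ℤ) : Submodule ℂ (ZMod n → ℂ) :=
  Submodule.span ℂ {chi n s, chi n (-s)}

/-- For `n = 4q`, the three invariant lines `L₁ = ℂ·f_0`,
`L₂ = ℂ·(f_q + f_{-q})`, `L₃ = ℂ·(f_q - f_{-q})` of the regular representation
of `R_n`. -/
noncomputable def lineRep (n q : ℕ) : Fin 3 → Submodule ℂ (ZMod n → ℂ)
  | 0 => ℂ ∙ chi n 0
  | 1 => ℂ ∙ (chi n q + chi n (-(q : ℤ)))
  | 2 => ℂ ∙ (chi n q - chi n (-(q : ℤ)))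

section aux

/-- `zz x = I ^ x.val`. -/
noncomputable def zz (n : ℕ) (x : ZMod n) : ℂ := Complex.I ^ x.val

lemma pow_mod_eq {ζ : ℂ} {n : ℕ} (hz : ζ ^ n = 1) (k : ℕ) : ζ ^ (k % n) = ζ ^ k := by
  conv_rhs => rw [← Nat.mod_add_div k n]
  rw [pow_add, pow_mul, hz, one_pow, mul_one]

lemma I_pow_n {n q : ℕ} (hq : n = 4 * q) : Complex.I ^ n = 1 := by
  rw [hq, pow_mul, Complex.I_pow_four, one_pow]

lemma zz_add {n q : ℕ} (hpos : 0 < n) (hq : n = 4 * q) (a b : ZMod n) :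
    zz n (a + b) = zz n a * zz n b := by
  haveI : NeZero n := ⟨hpos.ne'⟩
  rw [zz, ZMod.val_add, pow_mod_eq (I_pow_n hq), pow_add]; rfl

lemma zz_ne {n : ℕ} (x : ZMod n) : zz n x ≠ 0 := pow_ne_zero _ Complex.I_ne_zero

lemma zz_neg {n q : ℕ} (hpos : 0 < n) (hq : n = 4 * q) (x : ZMod n) :
    zz n (-x) = (zz n x)⁻¹ := by
  have h : zz n x * zz n (-x) = 1 := by
    rw [← zz_add hpos hq, add_neg_cancel, zz, ZMod.val_zero, pow_zero]
  field_simp [zz_ne x] at h ⊢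
  linear_combination h

lemma zz_two_mul {n q : ℕ} (hpos : 0 < n) (hq : n = 4 * q) (t : ZMod n) :
    zz n (2 * t) = (-1 : ℂ) ^ t.val := by
  rw [two_mul, zz_add hpos hq, zz, ← pow_add, ← two_mul, pow_mul, Complex.I_sq]

lemma omega_pow_q {n q : ℕ} (hpos : 0 < n) (hq : n = 4 * q) :
    dihedralOmega n ^ q = Complex.I := by
  have hq0 : (q : ℂ) ≠ 0 := by
    have : 0 < q := by omega
    exact_mod_cast this.ne'
  rw [dihedralOmega, ← Complex.exp_nat_mul]
  rw [show (q : ℂ) * (2 * Real.pi * Complex.I / n) = Real.pi / 2 * Complex.I by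
    rw [hq]; push_cast; field_simp; ring]
  rw [Complex.exp_mul_I]
  rw [show ((Real.pi:ℂ)/2) = ((Real.pi/2 : ℝ) : ℂ) by push_cast; ring]
  rw [← Complex.ofReal_cos, ← Complex.ofReal_sin]
  simp [Real.cos_pi_div_two, Real.sin_pi_div_two]

lemma chi_q_eq {n q : ℕ} (hpos : 0 < n) (hq : n = 4 * q) :
    chi n q = fun x => zz n x := by
  funext x
  rw [chi, zz, ← omega_pow_q hpos hq]
  rw [← zpow_natCast (dihedralOmega n ^ q) x.val, ← zpow_natCast (dihedralOmega n) q,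
    ← zpow_mul]

lemma chi_neg_q_eq {n q : ℕ} (hpos : 0 < n) (hq : n = 4 * q) :
    chi n (-(q:ℤ)) = fun x => (zz n x)⁻¹ := by
  funext x
  have := congrFun (chi_q_eq hpos hq) x
  rw [chi] at this ⊢
  rw [neg_mul, zpow_neg, this]

lemma chi_zero_eq (n : ℕ) : chi n 0 = fun _ => (1 : ℂ) := by
  funext x; rw [chi, zero_mul, zpow_zero]

lemma lam_chi_zero (n : ℕ) (t : ZMod n) : lam n t (chi n 0) = (1:ℂ) • chi n 0 := by
  funext x; simp [lam, chi_zero_eq]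

lemma key_val {n q : ℕ} (hpos : 0 < n) (hq : n = 4 * q) (t x : ZMod n) :
    zz n (2 * t - x) = (-1:ℂ)^t.val * (zz n x)⁻¹ := by
  rw [sub_eq_add_neg, zz_add hpos hq, zz_two_mul hpos hq, zz_neg hpos hq]

lemma lam_sum {n q : ℕ} (hpos : 0 < n) (hq : n = 4 * q) (t : ZMod n) :
    lam n t (chi n q + chi n (-(q:ℤ))) = ((-1:ℂ)^t.val) • (chi n q + chi n (-(q:ℤ))) := by
  funext x
  simp only [lam, Pi.add_apply, Pi.smul_apply, smul_eq_mul,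
    chi_q_eq hpos hq, chi_neg_q_eq hpos hq, key_val hpos hq t x]
  rcases neg_one_pow_eq_or ℂ t.val with h | h <;>
    rw [h] <;> field_simp [zz_ne (n := n) x] <;> ring

lemma lam_diff {n q : ℕ} (hpos : 0 < n) (hq : n = 4 * q) (t : ZMod n) :
    lam n t (chi n q - chi n (-(q:ℤ))) = (-((-1:ℂ)^t.val)) • (chi n q - chi n (-(q:ℤ))) := by
  funext x
  simp only [lam, Pi.sub_apply, Pi.smul_apply, smul_eq_mul,
    chi_q_eq hpos hq, chi_neg_q_eq hpos hq, key_val hpos hq t x]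
  rcases neg_one_pow_eq_or ℂ t.val with h | h <;>
    rw [h] <;> field_simp [zz_ne (n := n) x] <;> ring

/-- Abstract non-intertwining lemma between two invariant lines. -/
lemma no_intertwiner {n : ℕ} (g₁ g₂ : ZMod n → ℂ) (c₁ c₂ : ZMod n → ℂ)
    (h₁ : ∀ t, lam n t g₁ = c₁ t • g₁) (h₂ : ∀ t, lam n t g₂ = c₂ t • g₂)
    (hg₂ : g₂ ≠ 0) (t₀ : ZMod n) (hne : c₁ t₀ ≠ c₂ t₀) :
    ¬ ∃ φ : ↥(ℂ ∙ g₁) →ₗ[ℂ] ↥(ℂ ∙ g₂),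
        φ ≠ 0 ∧
        ∀ (t : ZMod n) (u w : ↥(ℂ ∙ g₁)),
          (w : ZMod n → ℂ) = lam n t ↑u →
          ((φ w : ↥(ℂ ∙ g₂)) : ZMod n → ℂ) = lam n t ↑(φ u) := by
  rintro ⟨φ, hφ0, hcomm⟩
  set u : ↥(ℂ ∙ g₁) := ⟨g₁, Submodule.mem_span_singleton_self g₁⟩ with hu
  have huspan : ∀ w : ↥(ℂ ∙ g₁), ∃ e : ℂ, w = e • u := by
    intro w
    obtain ⟨e, he⟩ := Submodule.mem_span_singleton.mp w.2
    exact ⟨e, by ext : 1; simp [← he, hu]⟩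
  have hφu : φ u ≠ 0 := by
    intro h
    apply hφ0
    ext w
    obtain ⟨e, rfl⟩ := huspan w
    simp [map_smul, h]
  obtain ⟨d, hd⟩ := Submodule.mem_span_singleton.mp (φ u).2
  have hd0 : d ≠ 0 := by
    rintro rfl
    refine hφu ?_
    ext : 1
    rw [← hd, zero_smul, ZeroMemClass.coe_zero]
  have hw : ((c₁ t₀ • u : ↥(ℂ ∙ g₁)) : ZMod n → ℂ) = lam n t₀ ↑u := by
    simp [hu, h₁ t₀]
  have key := hcomm t₀ u (c₁ t₀ • u) hw
  rw [map_smul] at key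
  have hlhs : ((c₁ t₀ • φ u : ↥(ℂ ∙ g₂)) : ZMod n → ℂ) = (c₁ t₀ * d) • g₂ := by
    rw [SetLike.val_smul, ← hd, smul_smul]
  have hrhs : lam n t₀ (↑(φ u) : ZMod n → ℂ) = (c₂ t₀ * d) • g₂ := by
    rw [← hd]
    funext x
    simp only [lam, Pi.smul_apply, smul_eq_mul]
    have := congrFun (h₂ t₀) x
    simp only [lam, Pi.smul_apply, smul_eq_mul] at this
    rw [this]; ring
  rw [hlhs, hrhs] at key
  have hfin : c₁ t₀ = c₂ t₀ := by
    have h := sub_eq_zero.mpr key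
    rw [← sub_smul] at h
    rcases smul_eq_zero.mp h with h | h
    · have h2 : (c₁ t₀ - c₂ t₀) * d = 0 := by linear_combination h
      rcases mul_eq_zero.mp h2 with h' | h'
      · exact sub_eq_zero.mp h'
      · exact absurd h' hd0
    · exact absurd h hg₂
  exact hne hfin

end aux

/-- For `n = 4q > 0`, the three invariant lines `ℂ·f_0`, `ℂ·(f_q + f_{-q})`,
`ℂ·(f_q - f_{-q})` are pairwise inequivalent: for `i ≠ j` there is no nonzero
`ℂ`-linear map `φ : L_i → L_j` intertwining all the operators `λ_t`.  (They
realize the three distinct one-dimensional representations `ℂ(1,1)`, `ℂ(-1,1)`,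
`ℂ(1,-1)`.) -/
theorem lines_pairwise_inequivalent (n q : ℕ) (hpos : 0 < n) (hq : n = 4 * q) :
    ∀ i j : Fin 3, i ≠ j →
      ¬ ∃ φ : ↥(lineRep n q i) →ₗ[ℂ] ↥(lineRep n q j),
          φ ≠ 0 ∧
          ∀ (t : ZMod n) (u w : ↥(lineRep n q i)),
            (w : ZMod n → ℂ) = lam n t ↑u →
            ((φ w : ↥(lineRep n q j)) : ZMod n → ℂ) = lam n t ↑(φ u) := by
  haveI : NeZero n := ⟨hpos.ne'⟩
  have h1lt : 1 < n := by omega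
  -- generators, scalars
  haveI : Fact (1 < n) := ⟨h1lt⟩
  have hval1 : (1 : ZMod n).val = 1 := ZMod.val_one n
  have hg0 : ∀ t, lam n t (chi n 0) = (fun _ : ZMod n => (1:ℂ)) t • chi n 0 :=
    fun t => lam_chi_zero n t
  have hg1 : ∀ t, lam n t (chi n q + chi n (-(q:ℤ)))
      = (fun t : ZMod n => ((-1:ℂ)^t.val)) t • (chi n q + chi n (-(q:ℤ))) :=
    fun t => lam_sum hpos hq t
  have hg2 : ∀ t, lam n t (chi n q - chi n (-(q:ℤ)))
      = (fun t : ZMod n => -((-1:ℂ)^t.val)) t • (chi n q - chi n (-(q:ℤ))) :=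
    fun t => lam_diff hpos hq t
  -- nonvanishing of generators
  have hne0 : chi n 0 ≠ 0 := by
    intro h
    have := congrFun h 0
    rw [chi_zero_eq] at this
    simpa using this
  have hne1 : chi n q + chi n (-(q:ℤ)) ≠ 0 := by
    intro h
    have := congrFun h 0
    rw [chi_q_eq hpos hq, chi_neg_q_eq hpos hq] at this
    simp [zz, ZMod.val_zero] at this
  have hne2 : chi n q - chi n (-(q:ℤ)) ≠ 0 := by
    intro h
    have := congrFun h 1
    rw [chi_q_eq hpos hq, chi_neg_q_eq hpos hq] at this
    simp only [Pi.sub_apply, Pi.zero_apply, zz, hval1, pow_one, Complex.inv_I,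
      sub_neg_eq_add, sub_eq_zero] at this
    simpa [Complex.ext_iff] using this
  have hval0 : (0 : ZMod n).val = 0 := ZMod.val_zero
  intro i j hij
  fin_cases i <;> fin_cases j <;> simp only [lineRep] at * <;> try exact absurd rfl hij
  · exact no_intertwiner _ _ _ _ hg0 hg1 hne1 1 (by rw [hval1]; norm_num)
  · exact no_intertwiner _ _ _ _ hg0 hg2 hne2 0 (by rw [hval0]; norm_num)
  · exact no_intertwiner _ _ _ _ hg1 hg0 hne0 1 (by rw [hval1]; norm_num)
  · exact no_intertwiner _ _ _ _ hg1 hg2 hne2 0 (by rw [hval0]; norm_num)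
  · exact no_intertwiner _ _ _ _ hg2 hg0 hne0 0 (by rw [hval0]; norm_num)
  · exact no_intertwiner _ _ _ _ hg2 hg1 hne1 0 (by rw [hval0]; norm_num)
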